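/- arXiv:1902.05992 — 5 statements merged into one kernel-verified Lean document; each statement's English description precedes it below -/
import Mathlib

section
/- Let K be a field of characteristic ≠ 2, g ≥ 1 odd, and a, α ∈ K with α ≠ 0. If (x, y) is an affine point with x ≠ 0 on the curve X: y² = x^{2g+1} + a x^{g+1} + α^g x, then setting ξ = x + α/x and η = (y / x^{(g−1)/2}) · (1 − α/x²), the point (ξ, η) satisfies η² = (ξ² − 4α)·(D_g(ξ, α) + a), where D_g is the Dickson polynomial of the first kind. -/
/-! Write `g = 2m + 1`. Since `x · (α/x) = α`, the Dickson recurrence gives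
`D_g(x + α/x, α) = x^g + (α/x)^g`, so the curve equation reads
`y² = x^{2m+2} (D_g(ξ, α) + a)`, i.e. `(y / x^m)² = x² (D_g(ξ, α) + a)`.
On the other hand `x² (1 - α/x²)² = (x - α/x)² = ξ² - 4α`. -/

open Polynomial

theorem Polynomial.dickson_one_eval_add {R : Type*} [CommRing R] {a x y : R} (h : x * y = a) :
    ∀ n, (dickson 1 a n).eval (x + y) = x ^ n + y ^ n
  | 0 => by norm_num
  | 1 => by simp
  | n + 2 => by
    subst h
    simp only [dickson_add_two, eval_sub, eval_mul, eval_X, eval_C,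
      dickson_one_eval_add rfl (n + 1), dickson_one_eval_add rfl n]
    ring

theorem sq_div_pow_eq_of_odd_curve {K : Type*} [Field K] {m : ℕ} {a α x y : K} (hx : x ≠ 0)
    (hxy : y ^ 2 = x ^ (2 * (2 * m + 1) + 1) + a * x ^ (2 * m + 1 + 1) + α ^ (2 * m + 1) * x) :
    (y / x ^ m) ^ 2 = x ^ 2 * (x ^ (2 * m + 1) + (α / x) ^ (2 * m + 1) + a) := by
  rw [div_pow, div_pow, hxy]
  field_simp
  ring

theorem add_div_sq_sub_four_mul {K : Type*} [Field K] {x : K} (α : K) (hx : x ≠ 0) :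
    (x + α / x) ^ 2 - 4 * α = (x * (1 - α / x ^ 2)) ^ 2 := by
  field_simp
  ring

theorem quotient_odd_omega_sigma_general {K : Type*} [Field K]
    (g : ℕ) (hodd : Odd g) (a α : K)
    (x y : K) (hx : x ≠ 0)
    (hxy : y ^ 2 = x ^ (2 * g + 1) + a * x ^ (g + 1) + α ^ g * x) :
    ((y / x ^ ((g - 1) / 2)) * (1 - α / x ^ 2)) ^ 2 =
      ((x + α / x) ^ 2 - 4 * α) *
        ((Polynomial.dickson 1 α g).eval (x + α / x) + a) := by
  obtain ⟨m, rfl⟩ := hodd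
  have hm : (2 * m + 1 - 1) / 2 = m := by omega
  rw [hm, dickson_one_eval_add (mul_div_cancel₀ α hx), add_div_sq_sub_four_mul α hx, mul_pow,
    sq_div_pow_eq_of_odd_curve hx hxy]
  ring

/-- Quotient map computation (odd genus): if `(x,y)` with `x ≠ 0` lies on
`X : y² = x^{2g+1} + a x^{g+1} + α^g x` then `ξ = x + α/x`,
`η = (y/x^{(g−1)/2})(1 − α/x²)` satisfy `η² = (ξ² − 4α)(D_g(ξ, α) + a)`. -/
theorem quotient_odd_omega_sigma {K : Type*} [Field K] (hK : (2 : K) ≠ 0)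
    (g : ℕ) (hg : 1 ≤ g) (hodd : Odd g) (a α : K) (hα : α ≠ 0)
    (x y : K) (hx : x ≠ 0)
    (hxy : y ^ 2 = x ^ (2 * g + 1) + a * x ^ (g + 1) + α ^ g * x) :
    ((y / x ^ ((g - 1) / 2)) * (1 - α / x ^ 2)) ^ 2 =
      ((x + α / x) ^ 2 - 4 * α) *
        ((Polynomial.dickson 1 α g).eval (x + α / x) + a) :=
  quotient_odd_omega_sigma_general g hodd a α x y hx hxy
end

section
/- Let K be a field of characteristic ≠ 2, g ≥ 2 even, a ∈ K, and α ∈ K a nonzero element with a square root √α ∈ K. If (x, y) is an affine point with x ≠ 0 on the curve X: y² = x^{2g+1} + a x^{g+1} + α^g x, then setting ξ = x + α/x and η = (y / x^{g/2}) · (1 − √α/x), the point (ξ, η) satisfies η² = (ξ − 2√α)·(D_g(ξ, α) + a). -/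
/-!
Since `x · (α/x) = α`, the Dickson polynomial evaluates to `D_g(ξ, α) = x^g + (α/x)^g`, and
`ξ - 2√α = (x - √α)² / x = x (1 - √α/x)²`. Writing `g = 2k`, the curve equation reads
`y² = x · (x^k)² · (D_g(ξ, α) + a)`, and dividing by `(x^k)²` gives the claim.
-/

namespace Polynomial

theorem dickson_one_eval_add_s6 {R : Type*} [CommRing R] {a : R} (x y : R) (h : x * y = a) :
    ∀ n, (dickson 1 a n).eval (x + y) = x ^ n + y ^ n
  | 0 => by
    simp only [pow_zero, dickson_zero]; norm_num
  | 1 => by simp only [eval_X, dickson_one, pow_one]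
  | n + 2 => by
    simp only [eval_sub, eval_mul, dickson_one_eval_add_s6 x y h _, eval_X, eval_C, dickson_add_two]
    subst h
    ring

end Polynomial

open Polynomial

theorem add_div_sub_two_mul_eq_mul_one_sub_div_sq {K : Type*} [Field K] {x : K} (hx : x ≠ 0)
    (s : K) : x + s ^ 2 / x - 2 * s = x * (1 - s / x) ^ 2 := by
  field_simp
  ring

theorem quotient_even_omega_sigma_general {K : Type*} [Field K]
    (g : ℕ) (heven : Even g) (a α s : K) (hs : s ^ 2 = α)
    (x y : K) (hx : x ≠ 0)
    (hxy : y ^ 2 = x ^ (2 * g + 1) + a * x ^ (g + 1) + α ^ g * x) :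
    ((y / x ^ (g / 2)) * (1 - s / x)) ^ 2 =
      ((x + α / x) - 2 * s) *
        ((Polynomial.dickson 1 α g).eval (x + α / x) + a) := by
  obtain ⟨k, rfl⟩ := heven
  have hdickson : (dickson 1 α (k + k)).eval (x + α / x) = x ^ (k + k) + (α / x) ^ (k + k) :=
    dickson_one_eval_add_s6 x (α / x) (mul_div_cancel₀ α hx) _
  have hcurve : y ^ 2 = x * (x ^ k) ^ 2 * ((dickson 1 α (k + k)).eval (x + α / x) + a) := by
    rw [hxy, hdickson, div_pow]
    field_simp
    ring
  rw [show (k + k) / 2 = k by omega, ← hs, add_div_sub_two_mul_eq_mul_one_sub_div_sq hx, hs,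
    mul_pow, div_pow, hcurve]
  field_simp

/-- Quotient map computation (even genus): if `(x,y)` with `x ≠ 0` lies on
`X : y² = x^{2g+1} + a x^{g+1} + α^g x` then `ξ = x + α/x`,
`η = (y/x^{g/2})(1 − √α/x)` satisfy `η² = (ξ − 2√α)(D_g(ξ, α) + a)`. -/
theorem quotient_even_omega_sigma {K : Type*} [Field K] (hK : (2 : K) ≠ 0)
    (g : ℕ) (hg : 2 ≤ g) (heven : Even g) (a α s : K) (hα : α ≠ 0) (hs : s ^ 2 = α)
    (x y : K) (hx : x ≠ 0)
    (hxy : y ^ 2 = x ^ (2 * g + 1) + a * x ^ (g + 1) + α ^ g * x) :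
    ((y / x ^ (g / 2)) * (1 - s / x)) ^ 2 =
      ((x + α / x) - 2 * s) *
        ((Polynomial.dickson 1 α g).eval (x + α / x) + a) :=
  quotient_even_omega_sigma_general g heven a α s hs x y hx hxy
end

section
/- Let K be a field of characteristic ≠ 2, g ≥ 1 odd, and a, α ∈ K with α ≠ 0. The map σ: (x, y) ↦ (α/x, y·α^{(g+1)/2}/x^{g+1}) sends affine points with x ≠ 0 of the curve X: y² = x^{2g+1} + a x^{g+1} + α^g x to points of X, and σ∘σ is the identity on such points. -/
/-! Since `g` is odd, `c = α ^ ((g + 1) / 2)` satisfies `c ^ 2 = α ^ (g + 1)`.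
Multiplying the curve equation by `α ^ (g + 1) / x ^ (2g + 2)` gives the equation at `σ (x, y)`,
and the second coordinate of `σ (σ (x, y))` is `y * c ^ 2 / α ^ (g + 1) = y`. -/

theorem Odd.pow_div_two_succ_sq {M : Type*} [Monoid M] {g : ℕ} (hg : Odd g) (α : M) :
    (α ^ ((g + 1) / 2)) ^ 2 = α ^ (g + 1) := by
  rw [← pow_mul, Nat.div_mul_cancel (even_iff_two_dvd.mp hg.add_one)]

section Field

variable {K : Type*} [Field K] {g : ℕ} {a α c x y : K}

theorem curve_eq_at_inversion (hx : x ≠ 0) (hc : c ^ 2 = α ^ (g + 1))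
    (hxy : y ^ 2 = x ^ (2 * g + 1) + a * x ^ (g + 1) + α ^ g * x) :
    (y * c / x ^ (g + 1)) ^ 2 =
      (α / x) ^ (2 * g + 1) + a * (α / x) ^ (g + 1) + α ^ g * (α / x) := by
  simp only [div_pow, mul_pow, hc, hxy]
  field_simp
  ring

theorem inversion_snd_involutive (hα : α ≠ 0) (hx : x ≠ 0) (hc : c ^ 2 = α ^ (g + 1)) :
    y * c / x ^ (g + 1) * c / (α / x) ^ (g + 1) = y := by
  rw [div_pow]
  field_simp
  rw [hc]

end Field

theorem involution_sigma_on_curve_general {K : Type*} [Field K]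
    (g : ℕ) (hodd : Odd g) (a α : K) (hα : α ≠ 0)
    (x y : K) (hx : x ≠ 0)
    (hxy : y ^ 2 = x ^ (2 * g + 1) + a * x ^ (g + 1) + α ^ g * x) :
    ((y * α ^ ((g + 1) / 2) / x ^ (g + 1)) ^ 2 =
        (α / x) ^ (2 * g + 1) + a * (α / x) ^ (g + 1) + α ^ g * (α / x)) ∧
      (α / (α / x) = x ∧
        (y * α ^ ((g + 1) / 2) / x ^ (g + 1)) * α ^ ((g + 1) / 2) / (α / x) ^ (g + 1) = y) := by
  have hc := hodd.pow_div_two_succ_sq α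
  exact ⟨curve_eq_at_inversion hx hc hxy, div_div_cancel₀ hα,
    inversion_snd_involutive hα hx hc⟩

/-- The map `σ : (x,y) ↦ (α/x, y·α^{(g+1)/2}/x^{g+1})` sends affine points with `x ≠ 0` of
`X : y² = x^{2g+1} + a x^{g+1} + α^g x` to points of `X`, and is an involution. -/
theorem involution_sigma_on_curve {K : Type*} [Field K] (hK : (2 : K) ≠ 0)
    (g : ℕ) (hg : 1 ≤ g) (hodd : Odd g) (a α : K) (hα : α ≠ 0)
    (x y : K) (hx : x ≠ 0)
    (hxy : y ^ 2 = x ^ (2 * g + 1) + a * x ^ (g + 1) + α ^ g * x) :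
    ((y * α ^ ((g + 1) / 2) / x ^ (g + 1)) ^ 2 =
        (α / x) ^ (2 * g + 1) + a * (α / x) ^ (g + 1) + α ^ g * (α / x)) ∧
      (α / (α / x) = x ∧
        (y * α ^ ((g + 1) / 2) / x ^ (g + 1)) * α ^ ((g + 1) / 2) / (α / x) ^ (g + 1) = y) :=
  involution_sigma_on_curve_general g hodd a α hα x y hx hxy
end

section
/- Let m, g, N be natural numbers with g ≥ 1, N ≡ m (mod g), and m ≤ N. Then the coefficient of x^N in (x^{2g+1} + a x^{g+1} + b x)^m over any commutative ring equals the sum over k₀ ≥ 0 (with m + (m−N)/g + k₀ ≥ 0 and (N−m)/g − 2k₀ ≥ 0) of the multinomial coefficient m! / (k₀! · ((N−m)/g − 2k₀)! · (m + (m−N)/g + k₀)!) times a^{(N−m)/g − 2k₀} · b^{m + (m−N)/g + k₀}. -/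
/-!
Since `X^{2g+1} + a X^{g+1} + b X = X · q(X^g)` with `q = X² + a X + b`, the coefficient of `X^N`
in its `m`-th power is the coefficient of `X^D`, `D = (N - m) / g`, in `q^m`. Expanding
`q^m = (X² + (a X + b))^m` binomially twice, the terms with `k` factors `X²` and `D - 2k` factors
`a X` contribute `C(m, k) · C(m - k, D - 2k) = m! / (k! (D - 2k)! (m + k - D)!)`.
-/

open Polynomial Finset
open scoped Nat

theorem Nat.factorial_div_factorial_mul_factorial_mul_factorial {n k j l : ℕ}
    (h : k + j + l = n) : n ! / (k ! * j ! * l !) = n.choose k * (n - k).choose j := by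
  obtain rfl : l = n - k - j := by omega
  refine Nat.div_eq_of_eq_mul_left (by positivity) ?_
  calc n ! = n.choose k * k ! * (n - k)! := (Nat.choose_mul_factorial_mul_factorial (by omega)).symm
    _ = n.choose k * k ! * ((n - k).choose j * j ! * (n - k - j)!) := by
      rw [Nat.choose_mul_factorial_mul_factorial (n := n - k) (k := j) (by omega)]
    _ = n.choose k * (n - k).choose j * (k ! * j ! * (n - k - j)!) := by ring

namespace Polynomial

variable {R : Type*} [CommSemiring R]

theorem coeff_C_mul_X_add_C_pow (a b : R) (n t : ℕ) :
    ((C a * X + C b) ^ n).coeff t = n.choose t * a ^ t * b ^ (n - t) := by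
  have hterm : ∀ i ∈ range (n + 1),
      ((C a * X) ^ i * C b ^ (n - i) * (n.choose i : R[X])).coeff t =
        if t = i then (n.choose i : R) * a ^ i * b ^ (n - i) else 0 := by
    intro i _
    have hmono : (C a * X) ^ i * C b ^ (n - i) * (n.choose i : R[X])
        = C ((n.choose i : R) * a ^ i * b ^ (n - i)) * X ^ i := by
      simp only [map_mul, map_pow, map_natCast]
      ring
    rw [hmono, coeff_C_mul_X_pow]
  rw [add_pow, finsetSum_coeff, sum_congr rfl hterm, sum_ite_eq]
  split_ifs with ht
  · rfl
  · rw [Nat.choose_eq_zero_of_lt (by simpa using ht)]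
    simp

theorem coeff_X_sq_add_C_mul_X_add_C_pow_eq_sum_choose (a b : R) (m D : ℕ) :
    ((X ^ 2 + C a * X + C b) ^ m).coeff D =
      ∑ k ∈ range (m + 1), if 2 * k ≤ D then
        (m.choose k * (m - k).choose (D - 2 * k) : R) * a ^ (D - 2 * k) *
          b ^ (m - k - (D - 2 * k)) else 0 := by
  rw [add_assoc, add_pow, finsetSum_coeff]
  refine sum_congr rfl fun k _ => ?_
  have hshift : (X ^ 2 : R[X]) ^ k * (C a * X + C b) ^ (m - k) * (m.choose k : R[X])
      = (C a * X + C b) ^ (m - k) * C (m.choose k : R) * X ^ (2 * k) := by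
    rw [map_natCast, pow_mul]
    ring
  rw [hshift, coeff_mul_X_pow', coeff_mul_C, coeff_C_mul_X_add_C_pow]
  split_ifs
  · ring
  · rfl

theorem coeff_X_sq_add_C_mul_X_add_C_pow (a b : R) (m D : ℕ) :
    ((X ^ 2 + C a * X + C b) ^ m).coeff D =
      ∑ k ∈ range (D + 1),
        if 2 * k ≤ D ∧ D ≤ m + k then
          ((m ! / (k ! * (D - 2 * k)! * (m + k - D)!) : ℕ) : R) *
            a ^ (D - 2 * k) * b ^ (m + k - D)
        else 0 := by
  set f : ℕ → R := fun k => if 2 * k ≤ D ∧ D ≤ m + k then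
    ((m ! / (k ! * (D - 2 * k)! * (m + k - D)!) : ℕ) : R) * a ^ (D - 2 * k) * b ^ (m + k - D)
    else 0
  have hf : ∀ n, m < n ∨ D < n → f n = 0 := fun n hn => if_neg (by omega)
  have hsum : ∑ k ∈ range (m + 1), f k = ∑ k ∈ range (D + 1), f k := by
    rw [← eventually_constant_sum (fun n hn => hf n (by omega)) (le_max_left (m + 1) (D + 1)),
      eventually_constant_sum (fun n hn => hf n (by omega)) (le_max_right (m + 1) (D + 1))]
  rw [coeff_X_sq_add_C_mul_X_add_C_pow_eq_sum_choose, ← hsum]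
  refine sum_congr rfl fun k hk => ?_
  have hkm : k ≤ m := by simpa [Nat.lt_succ_iff] using hk
  by_cases h2k : 2 * k ≤ D
  · by_cases hD : D ≤ m + k
    · have hparts : k + (D - 2 * k) + (m + k - D) = m := by omega
      simp only [f, if_pos h2k, if_pos (And.intro h2k hD),
        Nat.factorial_div_factorial_mul_factorial_mul_factorial hparts,
        show m - k - (D - 2 * k) = m + k - D by omega, Nat.cast_mul]
    · have hzero : (m - k).choose (D - 2 * k) = 0 := Nat.choose_eq_zero_of_lt (by omega)
      simp [f, h2k, hD, hzero]
  · simp [f, h2k]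

end Polynomial

/-- Multinomial expansion of the coefficient of `x^N` in `(x^{2g+1} + a x^{g+1} + b x)^m`,
for `N ≡ m (mod g)` and `m ≤ N`, as a sum over `k₀` of
`m!/(k₀!·((N−m)/g − 2k₀)!·(m + k₀ − (N−m)/g)!) · a^{(N−m)/g − 2k₀} · b^{m + k₀ − (N−m)/g}`. -/
theorem coeff_eq_multinomial_sum {R : Type*} [CommRing R] (a b : R)
    (m g N : ℕ) (hg : 1 ≤ g) (hmN : m ≤ N) (hdvd : g ∣ N - m) :
    ((Polynomial.X ^ (2 * g + 1) + Polynomial.C a * Polynomial.X ^ (g + 1)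
        + Polynomial.C b * Polynomial.X) ^ m).coeff N =
      ∑ k ∈ Finset.range ((N - m) / g + 1),
        if 2 * k ≤ (N - m) / g ∧ (N - m) / g ≤ m + k then
          ((Nat.factorial m /
              (Nat.factorial k * Nat.factorial ((N - m) / g - 2 * k) *
                Nat.factorial (m + k - (N - m) / g)) : ℕ) : R) *
            a ^ ((N - m) / g - 2 * k) * b ^ (m + k - (N - m) / g)
        else 0 := by
  have hsubst : (X ^ (2 * g + 1) + C a * X ^ (g + 1) + C b * X : R[X])
      = expand R g (X ^ 2 + C a * X + C b) * X := by
    simp only [map_add, map_mul, map_pow, expand_X, expand_C]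
    ring
  rw [hsubst, mul_pow, ← map_pow, coeff_mul_X_pow', if_pos hmN, coeff_expand hg, if_pos hdvd,
    coeff_X_sq_add_C_mul_X_add_C_pow]
end

section
/- Let W be an n×n matrix over a commutative ring whose nonzero entries are supported on a permutation, i.e., W_{i,j} = 0 unless j = σ(i) for a permutation σ of {1,...,n}. If σ decomposes into disjoint cycles σ₁, ..., σ_k of lengths ℓ₁, ..., ℓ_k, then the characteristic polynomial of W equals ∏_{i=1}^{k} (T^{ℓ_i} − ∏_{j} W_{σ_i^j(m_i), σ_i^{j+1}(m_i)}), where for each cycle σ_i, m_i is any element of its support and the inner product is over one full traversal of the cycle. -/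
/-!
In the expansion of `det (T • 1 - W)` over permutations `τ`, only those with `τ i ∈ {i, σ i}`
for all `i` contribute. These are exactly the permutations whose cycle factors form a subset `S`
of the cycle factors of `σ`, and `τ` is then determined by `S`. Its term is the product of the
diagonal entries outside the cycles of `S` times, for each cycle `c ∈ S`, the sign
`-(-1) ^ #c.support` of `c` times the product of the entries along `c`. Summing over all `S`
factors as a product over the cycles of `σ`; on a nontrivial cycle the diagonal of `T • 1 - W`
is `T` and the off-diagonal entries are `-W i (σ i)`, whence the factor
`T ^ ℓ - ∏ W i (σ i)`.
-/

open Polynomial Finset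

namespace Equiv.Perm

theorem IsCycleOn.prod_range_card_pow_apply {α M : Type*} [CommMonoid M] {f : Perm α}
    {s : Finset α} (hf : f.IsCycleOn s) {a : α} (ha : a ∈ s) (g : α → M) :
    ∏ j ∈ range #s, g ((f ^ j) a) = ∏ x ∈ s, g x := by
  refine prod_nbij (fun j => (f ^ j) a) (fun j _ => hf.1.mapsTo.perm_pow j ha) ?_ ?_
    fun _ _ => rfl
  · intro i hi j hj hij
    rw [mem_coe, mem_range] at hi hj
    exact Nat.ModEq.eq_of_lt_of_lt ((hf.pow_apply_eq_pow_apply ha).mp hij) hi hj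
  · intro x hx
    obtain ⟨j, hj, rfl⟩ := hf.exists_pow_eq ha hx
    exact ⟨j, mem_range.mpr hj, rfl⟩

variable {α : Type*} [Fintype α] [DecidableEq α]

theorem prod_range_pow_apply_pow_succ_apply {M : Type*} [CommMonoid M] {σ c : Perm α}
    (hc : c ∈ σ.cycleFactorsFinset) {x : α} (hx : x ∈ c.support) (g : α → α → M) :
    ∏ j ∈ range #c.support, g ((c ^ j) x) ((c ^ (j + 1)) x) =
      ∏ i ∈ c.support, g i (σ i) := by
  obtain ⟨hcyc, hcσ⟩ := mem_cycleFactorsFinset_iff.mp hc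
  have hcOn : c.IsCycleOn c.support := by
    rw [coe_support_eq_set_support]
    exact hcyc.isCycleOn
  simp only [pow_succ', mul_apply]
  rw [hcOn.prod_range_card_pow_apply hx fun i => g i (c i)]
  exact prod_congr rfl fun i hi => by rw [hcσ i hi]

theorem cycleFactorsFinset_subset_iff {σ τ : Perm α} :
    τ.cycleFactorsFinset ⊆ σ.cycleFactorsFinset ↔ ∀ x, τ x = x ∨ τ x = σ x := by
  constructor
  · intro h x
    refine or_iff_not_imp_left.mpr fun hx => ?_
    have hxτ : x ∈ τ.support := mem_support.mpr hx
    have hcτ := h (cycleOf_mem_cycleFactorsFinset_iff.mpr hxτ)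
    rw [← cycleOf_apply_self τ x]
    exact (mem_cycleFactorsFinset_iff.mp hcτ).2 x
      (mem_support_cycleOf_iff.mpr ⟨.refl _ _, hxτ⟩)
  · intro h c hc
    obtain ⟨hcyc, hcτ⟩ := mem_cycleFactorsFinset_iff.mp hc
    refine mem_cycleFactorsFinset_iff.mpr ⟨hcyc, fun x hx => ?_⟩
    have hx' : τ x ≠ x := hcτ x hx ▸ mem_support.mp hx
    rw [hcτ x hx]
    exact (h x).resolve_left hx'

theorem apply_eq_ite_of_cycleFactorsFinset_subset {σ τ c : Perm α}
    (h : τ.cycleFactorsFinset ⊆ σ.cycleFactorsFinset) (hc : c ∈ σ.cycleFactorsFinset)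
    {x : α} (hx : x ∈ c.support) : τ x = if c ∈ τ.cycleFactorsFinset then σ x else x := by
  split_ifs with hcτ
  · rw [← (mem_cycleFactorsFinset_iff.mp hcτ).2 x hx,
      (mem_cycleFactorsFinset_iff.mp hc).2 x hx]
  · by_contra hne
    have hxτ : x ∈ τ.support := mem_support.mpr hne
    have hτx := cycleOf_mem_cycleFactorsFinset_iff.mpr hxτ
    have hx' : x ∈ (τ.cycleOf x).support := mem_support_cycleOf_iff.mpr ⟨.refl _ _, hxτ⟩
    rw [cycle_is_cycleOf hx hc, ← cycle_is_cycleOf hx' (h hτx)] at hcτ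
    exact hcτ hτx

theorem sign_eq_prod_cycleFactorsFinset (τ : Perm α) :
    sign τ = ∏ c ∈ τ.cycleFactorsFinset, -(-1) ^ #c.support := by
  rw [sign_of_cycleType', cycleType_def, Multiset.map_map]
  rfl

theorem prod_eq_prod_fixed_mul_prod_cycleFactorsFinset {M : Type*} [CommMonoid M]
    (σ : Perm α) (f : α → M) :
    ∏ i, f i =
      (∏ i with σ i = i, f i) * ∏ c ∈ σ.cycleFactorsFinset, ∏ i ∈ c.support, f i := by
  have hsupp : σ.support = σ.cycleFactorsFinset.biUnion support := by
    conv_lhs => rw [← cycleFactorsFinset_noncommProd σ]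
    exact support_noncommProd σ.cycleFactorsFinset_pairwise_disjoint
  rw [← prod_filter_mul_prod_filter_not univ (fun i => σ i = i)]
  congr 1
  rw [← prod_biUnion fun c hc d hd hcd =>
    (σ.cycleFactorsFinset_pairwise_disjoint hc hd hcd).disjoint_support, ← hsupp]
  rfl

theorem sum_cycleFactorsFinset_subset_eq_sum_powerset {M : Type*} [AddCommMonoid M]
    (σ : Perm α) (f : Finset (Perm α) → M) :
    ∑ τ : Perm α with τ.cycleFactorsFinset ⊆ σ.cycleFactorsFinset, f τ.cycleFactorsFinset =
      ∑ S ∈ σ.cycleFactorsFinset.powerset, f S := by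
  refine sum_nbij cycleFactorsFinset (fun τ hτ => mem_powerset.mpr (mem_filter.mp hτ).2)
    (cycleFactorsFinset_injective.injOn) (fun S hS => ?_) fun _ _ => rfl
  have hS := mem_powerset.mp hS
  have hdisj := σ.cycleFactorsFinset_pairwise_disjoint.mono (coe_subset.mpr hS)
  have hτ :
      (S.noncommProd id (hdisj.mono' fun _ _ => Disjoint.commute)).cycleFactorsFinset = S :=
    cycleFactorsFinset_eq_finset.mpr
      ⟨fun c hc => (mem_cycleFactorsFinset_iff.mp (hS hc)).1, hdisj, rfl⟩
  exact ⟨_, mem_filter.mpr ⟨mem_univ _, hτ.symm ▸ hS⟩, hτ⟩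

theorem sign_smul_prod_apply_of_cycleFactorsFinset_subset {A : Type*} [CommRing A]
    (g : α → α → A) {σ τ : Perm α} (h : τ.cycleFactorsFinset ⊆ σ.cycleFactorsFinset) :
    sign τ • ∏ i, g i (τ i) = (∏ i with σ i = i, g i i) *
      ((∏ c ∈ τ.cycleFactorsFinset, -(-1) ^ #c.support * ∏ i ∈ c.support, g i (σ i)) *
        ∏ c ∈ σ.cycleFactorsFinset \ τ.cycleFactorsFinset, ∏ i ∈ c.support, g i i) := by
  have hfixed : ∀ i ∈ univ.filter (fun i => σ i = i), g i (τ i) = g i i := fun i hi => by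
    rw [(cycleFactorsFinset_subset_iff.mp h i).elim id fun h' => h'.trans (mem_filter.mp hi).2]
  have hcycle : ∀ c ∈ σ.cycleFactorsFinset, ∏ i ∈ c.support, g i (τ i) =
      if c ∈ τ.cycleFactorsFinset then ∏ i ∈ c.support, g i (σ i)
      else ∏ i ∈ c.support, g i i :=
    fun c hc => by
      split_ifs with hcτ <;> refine prod_congr rfl fun i hi => ?_ <;>
        simp only [apply_eq_ite_of_cycleFactorsFinset_subset h hc hi, hcτ, if_true, if_false]
  rw [prod_eq_prod_fixed_mul_prod_cycleFactorsFinset σ, prod_congr rfl hfixed,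
    prod_congr rfl hcycle, prod_ite, filter_mem_eq_inter, inter_eq_right.mpr h,
    filter_notMem_eq_sdiff, sign_eq_prod_cycleFactorsFinset, Units.smul_def, zsmul_eq_mul,
    prod_mul_distrib]
  push_cast
  ring

end Equiv.Perm

namespace Matrix

open Equiv Perm

variable {α A : Type*} [Fintype α] [DecidableEq α] [CommRing A]

theorem det_of_apply_eq_zero_of_ne_perm (M : Matrix α α A) (σ : Perm α)
    (hM : ∀ i j, j ≠ i → j ≠ σ i → M i j = 0) :
    M.det = (∏ i with σ i = i, M i i) * ∏ c ∈ σ.cycleFactorsFinset,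
      (∏ i ∈ c.support, M i i - (-1) ^ #c.support * ∏ i ∈ c.support, M i (σ i)) := by
  have hvanish : ∀ τ : Perm α, ¬τ.cycleFactorsFinset ⊆ σ.cycleFactorsFinset →
      sign τ • ∏ i, M i (τ i) = 0 := fun τ hτ => by
    obtain ⟨i, hi⟩ := not_forall.mp (mt cycleFactorsFinset_subset_iff.mpr hτ)
    rw [not_or] at hi
    rw [prod_eq_zero (mem_univ i) (hM i (τ i) hi.1 hi.2), smul_zero]
  calc M.det = ∑ τ : Perm α, sign τ • ∏ i, M i (τ i) := by
        rw [← det_transpose, det_apply]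
        rfl
    _ = ∑ τ : Perm α with τ.cycleFactorsFinset ⊆ σ.cycleFactorsFinset,
          sign τ • ∏ i, M i (τ i) :=
        (sum_subset (filter_subset _ _) fun τ _ hτ =>
          hvanish τ fun h => hτ (mem_filter.mpr ⟨mem_univ τ, h⟩)).symm
    _ = ∑ S ∈ σ.cycleFactorsFinset.powerset, (∏ i with σ i = i, M i i) *
          ((∏ c ∈ S, -(-1) ^ #c.support * ∏ i ∈ c.support, M i (σ i)) *
            ∏ c ∈ σ.cycleFactorsFinset \ S, ∏ i ∈ c.support, M i i) := by
        rw [← sum_cycleFactorsFinset_subset_eq_sum_powerset σ]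
        exact sum_congr rfl fun τ hτ =>
          sign_smul_prod_apply_of_cycleFactorsFinset_subset M (mem_filter.mp hτ).2
    _ = _ := by
        rw [← mul_sum, ← prod_add]
        exact congrArg _ (prod_congr rfl fun c _ => by ring)

end Matrix

open Equiv.Perm in
/-- The characteristic polynomial of a generalized permutation matrix factors according to
the cycle decomposition of the underlying permutation: fixed points contribute linear
factors `T − W i i` and each nontrivial cycle `c` of length `ℓ` contributes
`T^ℓ − ∏_j W_{c^j(m), c^{j+1}(m)}` for any point `m` of its support. -/
theorem charpoly_of_generalized_perm {R : Type*} [CommRing R] {n : ℕ}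
    (W : Matrix (Fin n) (Fin n) R) (σ : Equiv.Perm (Fin n))
    (hW : ∀ i j, j ≠ σ i → W i j = 0)
    (m : Equiv.Perm (Fin n) → Fin n)
    (hm : ∀ c ∈ σ.cycleFactorsFinset, m c ∈ c.support) :
    W.charpoly =
      (∏ i ∈ Finset.univ.filter (fun i => σ i = i), (X - C (W i i))) *
        ∏ c ∈ σ.cycleFactorsFinset,
          (X ^ c.support.card -
            C (∏ j ∈ Finset.range c.support.card,
              W ((c ^ j) (m c)) ((c ^ (j + 1)) (m c)))) := by
  have hM : ∀ i j, j ≠ i → j ≠ σ i → W.charmatrix i j = 0 := fun i j hji hj => by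
    rw [Matrix.charmatrix_apply_ne _ _ _ hji.symm, hW i j hj, map_zero, neg_zero]
  rw [Matrix.charpoly, Matrix.det_of_apply_eq_zero_of_ne_perm _ σ hM]
  congr 1
  · exact prod_congr rfl fun i _ => Matrix.charmatrix_apply_eq W i
  refine prod_congr rfl fun c hc => ?_
  obtain ⟨-, hcσ⟩ := mem_cycleFactorsFinset_iff.mp hc
  have hmoved : ∀ i ∈ c.support, σ i ≠ i := fun i hi => hcσ i hi ▸ mem_support.mp hi
  have hdiag : ∀ i ∈ c.support, W.charmatrix i i = X := fun i hi => by
    rw [Matrix.charmatrix_apply_eq, hW i i (hmoved i hi).symm, map_zero, sub_zero]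
  have hoff : ∀ i ∈ c.support, W.charmatrix i (σ i) = -C (W i (σ i)) := fun i hi =>
    Matrix.charmatrix_apply_ne _ _ _ (hmoved i hi).symm
  rw [prod_congr rfl hdiag, prod_congr rfl hoff, prod_const, prod_neg, ← mul_assoc,
    ← mul_pow, neg_one_mul, neg_neg, one_pow, one_mul,
    prod_range_pow_apply_pow_succ_apply hc (hm c hc) W, map_prod]
end
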